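/- Let A₁, A₂ be constant positive symmetric d×d matrices, Σ₁, Σ₂ > 0 constants, and λ ≥ 1. For ξ' ∈ ℝ^{d−1} set (for j = 1,2) a_j = (A_j)_{dd}, b_j = Σ_{k<d}(A_j)_{dk}ξ'_k, c_j = Σ_{k,l<d}(A_j)_{kl}ξ'_kξ'_l, and Δ_j = −b_j² + a_j(c_j + iλΣ_j). Assume that for all nonzero ξ ⊥ e_d: ⟨A₂e_d,e_d⟩⟨A₂ξ,ξ⟩ − ⟨A₂e_d,ξ⟩² ≠ ⟨A₁e_d,e_d⟩⟨A₁ξ,ξ⟩ − ⟨A₁e_d,ξ⟩², and that ⟨A₁e_d,e_d⟩Σ₁ ≠ ⟨A₂e_d,e_d⟩Σ₂. Then there is a constant C (depending only on d, A₁, A₂, Σ₁, Σ₂) such that |Δ₂ − Δ₁|² ≥ C^{-1}(|ξ'|⁴ + λ²) and |Δ_j| ≤ C(|ξ'|² + λ) for all ξ' ∈ ℝ^{d−1} and λ ≥ 1; consequently √Δ₂ / |√Δ₂ − √Δ₁| ≤ C', where √ denotes the square root with positive real part. -/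

import Mathlib

noncomputable section

/-- quadratic/bilinear form `⟨A x, y⟩` of a real matrix. -/
def qf {n : ℕ} (A : Matrix (Fin n) (Fin n) ℝ) (x y : EuclideanSpace ℝ (Fin n)) : ℝ :=
  ∑ i, ∑ j, A i j * x j * y i

/-- `a_j = (A_j)_{dd}` (dimension is `d+1`, the normal index is the last one). -/
def aCoef {d : ℕ} (A : Matrix (Fin (d + 1)) (Fin (d + 1)) ℝ) : ℝ := A (Fin.last d) (Fin.last d)

/-- `b_j = Σ_{k<d} (A_j)_{dk} ξ'_k`. -/
def bCoef {d : ℕ} (A : Matrix (Fin (d + 1)) (Fin (d + 1)) ℝ)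
    (ξ' : EuclideanSpace ℝ (Fin d)) : ℝ :=
  ∑ k : Fin d, A (Fin.last d) k.castSucc * ξ' k

/-- `c_j = Σ_{k,l<d} (A_j)_{kl} ξ'_k ξ'_l`. -/
def cCoef {d : ℕ} (A : Matrix (Fin (d + 1)) (Fin (d + 1)) ℝ)
    (ξ' : EuclideanSpace ℝ (Fin d)) : ℝ :=
  ∑ k : Fin d, ∑ l : Fin d, A k.castSucc l.castSucc * ξ' k * ξ' l

/-- `Δ_j = −b_j² + a_j (c_j + iλΣ_j)`. -/
def Delta {d : ℕ} (A : Matrix (Fin (d + 1)) (Fin (d + 1)) ℝ) (Sig lam : ℝ)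
    (ξ' : EuclideanSpace ℝ (Fin d)) : ℂ :=
  -(bCoef A ξ' : ℂ) ^ 2 + (aCoef A : ℂ) * ((cCoef A ξ' : ℂ) + Complex.I * lam * Sig)

-- extension of ξ' by zero
def ext {d : ℕ} (ξ' : EuclideanSpace ℝ (Fin d)) : EuclideanSpace ℝ (Fin (d + 1)) :=
  WithLp.toLp 2 (Fin.snoc (α := fun _ => ℝ) (fun k => ξ' k) 0)

lemma ext_castSucc {d : ℕ} (ξ' : EuclideanSpace ℝ (Fin d)) (k : Fin d) :
    ext ξ' k.castSucc = ξ' k := by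
  show Fin.snoc (α := fun _ => ℝ) (fun k => ξ' k) 0 k.castSucc = ξ' k
  exact Fin.snoc_castSucc _ _ _

lemma ext_last {d : ℕ} (ξ' : EuclideanSpace ℝ (Fin d)) : ext ξ' (Fin.last d) = 0 := by
  show Fin.snoc (α := fun _ => ℝ) (fun k => ξ' k) 0 (Fin.last d) = 0
  exact Fin.snoc_last _ _

lemma ext_ne_zero {d : ℕ} (ξ' : EuclideanSpace ℝ (Fin d)) (h : ξ' ≠ 0) : ext ξ' ≠ 0 := by
  intro h0
  apply h
  ext k
  have : ext ξ' k.castSucc = 0 := by rw [h0]; rfl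
  rwa [ext_castSucc] at this

lemma qf_ee {d : ℕ} (A : Matrix (Fin (d + 1)) (Fin (d + 1)) ℝ) :
    qf A (EuclideanSpace.single (Fin.last d) 1) (EuclideanSpace.single (Fin.last d) 1) =
      aCoef A := by
  simp [qf, EuclideanSpace.single_apply, aCoef]

lemma qf_ext_ext {d : ℕ} (A : Matrix (Fin (d + 1)) (Fin (d + 1)) ℝ)
    (ξ' : EuclideanSpace ℝ (Fin d)) : qf A (ext ξ') (ext ξ') = cCoef A ξ' := by
  unfold qf cCoef
  rw [Fin.sum_univ_castSucc]
  simp only [ext_last, mul_zero, Finset.sum_const_zero, add_zero]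
  congr 1
  funext i
  rw [Fin.sum_univ_castSucc]
  simp [ext_last, ext_castSucc, mul_right_comm]

lemma qf_e_ext {d : ℕ} (A : Matrix (Fin (d + 1)) (Fin (d + 1)) ℝ) (hA : A.IsSymm)
    (ξ' : EuclideanSpace ℝ (Fin d)) :
    qf A (EuclideanSpace.single (Fin.last d) 1) (ext ξ') = bCoef A ξ' := by
  unfold qf bCoef
  have : ∀ i : Fin (d+1), (∑ j, A i j * (EuclideanSpace.single (Fin.last d) (1:ℝ)) j * (ext ξ') i)
      = A i (Fin.last d) * ext ξ' i := by
    intro i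
    simp [EuclideanSpace.single_apply]
  rw [Finset.sum_congr rfl fun i _ => this i]
  rw [Fin.sum_univ_castSucc]
  simp only [ext_last, mul_zero, add_zero, ext_castSucc]
  exact Finset.sum_congr rfl fun k _ => by rw [hA.apply]

lemma bCoef_smul {d : ℕ} (A : Matrix (Fin (d + 1)) (Fin (d + 1)) ℝ) (t : ℝ)
    (ξ' : EuclideanSpace ℝ (Fin d)) : bCoef A (t • ξ') = t * bCoef A ξ' := by
  unfold bCoef
  rw [Finset.mul_sum]
  refine Finset.sum_congr rfl fun k _ => ?_
  have : (t • ξ') k = t * ξ' k := rfl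
  rw [this]; ring

lemma cCoef_smul {d : ℕ} (A : Matrix (Fin (d + 1)) (Fin (d + 1)) ℝ) (t : ℝ)
    (ξ' : EuclideanSpace ℝ (Fin d)) : cCoef A (t • ξ') = t ^ 2 * cCoef A ξ' := by
  unfold cCoef
  rw [Finset.mul_sum]
  refine Finset.sum_congr rfl fun k _ => ?_
  rw [Finset.mul_sum]
  refine Finset.sum_congr rfl fun l _ => ?_
  have h1 : (t • ξ') k = t * ξ' k := rfl
  have h2 : (t • ξ') l = t * ξ' l := rfl
  rw [h1, h2]; ring

lemma bCoef_cont {d : ℕ} (A : Matrix (Fin (d + 1)) (Fin (d + 1)) ℝ) :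
    Continuous (bCoef A (d := d)) := by
  unfold bCoef
  exact continuous_finset_sum _ fun k _ =>
    continuous_const.mul (EuclideanSpace.proj k).continuous

lemma cCoef_cont {d : ℕ} (A : Matrix (Fin (d + 1)) (Fin (d + 1)) ℝ) :
    Continuous (cCoef A (d := d)) := by
  unfold cCoef
  exact continuous_finset_sum _ fun k _ => continuous_finset_sum _ fun l _ =>
    (continuous_const.mul (EuclideanSpace.proj k).continuous).mul
      (EuclideanSpace.proj l).continuous

lemma Delta_re {d : ℕ} (A : Matrix (Fin (d + 1)) (Fin (d + 1)) ℝ) (Sig lam : ℝ)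
    (ξ' : EuclideanSpace ℝ (Fin d)) :
    (Delta A Sig lam ξ').re = aCoef A * cCoef A ξ' - (bCoef A ξ') ^ 2 := by
  simp [Delta, ← Complex.ofReal_pow]; ring

lemma Delta_im {d : ℕ} (A : Matrix (Fin (d + 1)) (Fin (d + 1)) ℝ) (Sig lam : ℝ)
    (ξ' : EuclideanSpace ℝ (Fin d)) :
    (Delta A Sig lam ξ').im = aCoef A * Sig * lam := by
  simp [Delta, ← Complex.ofReal_pow]; ring

lemma coord_le_norm {d : ℕ} (x : EuclideanSpace ℝ (Fin d)) (k : Fin d) : |x k| ≤ ‖x‖ := by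
  rw [EuclideanSpace.norm_eq]
  have h1 : |x k| = Real.sqrt (|x k| ^ 2) := by
    rw [Real.sqrt_sq (abs_nonneg _)]
  rw [h1]
  apply Real.sqrt_le_sqrt
  have := Finset.single_le_sum (f := fun i => ‖x i‖ ^ 2)
    (fun i _ => sq_nonneg _) (Finset.mem_univ k)
  simpa [Real.norm_eq_abs] using this

lemma abs_aCoef_le {d : ℕ} (A : Matrix (Fin (d + 1)) (Fin (d + 1)) ℝ) :
    |aCoef A| ≤ ∑ i, ∑ j, |A i j| := by
  calc |aCoef A| ≤ ∑ j, |A (Fin.last d) j| :=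
        Finset.single_le_sum (f := fun j => |A (Fin.last d) j|)
          (fun _ _ => abs_nonneg _) (Finset.mem_univ _)
    _ ≤ ∑ i, ∑ j, |A i j| :=
        Finset.single_le_sum (f := fun i => ∑ j, |A i j|)
          (fun _ _ => Finset.sum_nonneg fun _ _ => abs_nonneg _) (Finset.mem_univ _)

lemma abs_bCoef_le {d : ℕ} (A : Matrix (Fin (d + 1)) (Fin (d + 1)) ℝ)
    (ξ' : EuclideanSpace ℝ (Fin d)) :
    |bCoef A ξ'| ≤ (∑ i, ∑ j, |A i j|) * ‖ξ'‖ := by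
  calc |bCoef A ξ'| ≤ ∑ k : Fin d, |A (Fin.last d) k.castSucc * ξ' k| :=
        Finset.abs_sum_le_sum_abs _ _
    _ ≤ ∑ k : Fin d, |A (Fin.last d) k.castSucc| * ‖ξ'‖ := by
        refine Finset.sum_le_sum fun k _ => ?_
        rw [abs_mul]
        exact mul_le_mul_of_nonneg_left (coord_le_norm ξ' k) (abs_nonneg _)
    _ = (∑ k : Fin d, |A (Fin.last d) k.castSucc|) * ‖ξ'‖ := by rw [Finset.sum_mul]
    _ ≤ (∑ i, ∑ j, |A i j|) * ‖ξ'‖ := by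
        refine mul_le_mul_of_nonneg_right ?_ (norm_nonneg _)
        calc (∑ k : Fin d, |A (Fin.last d) k.castSucc|) ≤ ∑ j, |A (Fin.last d) j| := by
              rw [Fin.sum_univ_castSucc (f := fun j => |A (Fin.last d) j|)]
              have := abs_nonneg (A (Fin.last d) (Fin.last d))
              linarith
          _ ≤ ∑ i, ∑ j, |A i j| :=
              Finset.single_le_sum (f := fun i => ∑ j, |A i j|)
                (fun _ _ => Finset.sum_nonneg fun _ _ => abs_nonneg _) (Finset.mem_univ _)

lemma abs_cCoef_le {d : ℕ} (A : Matrix (Fin (d + 1)) (Fin (d + 1)) ℝ)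
    (ξ' : EuclideanSpace ℝ (Fin d)) :
    |cCoef A ξ'| ≤ (∑ i, ∑ j, |A i j|) * ‖ξ'‖ ^ 2 := by
  have key : ∀ k : Fin d, |∑ l : Fin d, A k.castSucc l.castSucc * ξ' k * ξ' l| ≤
      (∑ l, |A k.castSucc l|) * ‖ξ'‖ ^ 2 := by
    intro k
    calc |∑ l : Fin d, A k.castSucc l.castSucc * ξ' k * ξ' l|
        ≤ ∑ l : Fin d, |A k.castSucc l.castSucc * ξ' k * ξ' l| :=
          Finset.abs_sum_le_sum_abs _ _
      _ ≤ ∑ l : Fin d, |A k.castSucc l.castSucc| * ‖ξ'‖ ^ 2 := by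
          refine Finset.sum_le_sum fun l _ => ?_
          rw [abs_mul, abs_mul, sq, mul_assoc]
          refine mul_le_mul_of_nonneg_left ?_ (abs_nonneg _)
          exact mul_le_mul (coord_le_norm ξ' k) (coord_le_norm ξ' l) (abs_nonneg _)
            (norm_nonneg _)
      _ = (∑ l : Fin d, |A k.castSucc l.castSucc|) * ‖ξ'‖ ^ 2 := by rw [Finset.sum_mul]
      _ ≤ (∑ l, |A k.castSucc l|) * ‖ξ'‖ ^ 2 := by
          refine mul_le_mul_of_nonneg_right ?_ (sq_nonneg _)
          rw [Fin.sum_univ_castSucc (f := fun l => |A k.castSucc l|)]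
          have := abs_nonneg (A k.castSucc (Fin.last d))
          linarith
  calc |cCoef A ξ'| ≤ ∑ k : Fin d, |∑ l : Fin d, A k.castSucc l.castSucc * ξ' k * ξ' l| :=
        Finset.abs_sum_le_sum_abs _ _
    _ ≤ ∑ k : Fin d, (∑ l, |A k.castSucc l|) * ‖ξ'‖ ^ 2 := Finset.sum_le_sum fun k _ => key k
    _ = (∑ k : Fin d, ∑ l, |A k.castSucc l|) * ‖ξ'‖ ^ 2 := by rw [Finset.sum_mul]
    _ ≤ (∑ i, ∑ j, |A i j|) * ‖ξ'‖ ^ 2 := by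
        refine mul_le_mul_of_nonneg_right ?_ (sq_nonneg _)
        rw [Fin.sum_univ_castSucc (f := fun i => ∑ j, |A i j|)]
        have : (0:ℝ) ≤ ∑ j, |A (Fin.last d) j| := Finset.sum_nonneg fun _ _ => abs_nonneg _
        linarith

lemma Delta_norm_le {d : ℕ} (A : Matrix (Fin (d + 1)) (Fin (d + 1)) ℝ) (Sig lam : ℝ)
    (hS : 0 < Sig) (ξ' : EuclideanSpace ℝ (Fin d)) (hlam : 1 ≤ lam) :
    ‖Delta A Sig lam ξ'‖ ≤
      (2 * (∑ i, ∑ j, |A i j|) ^ 2 + (∑ i, ∑ j, |A i j|) * Sig + 1) * (‖ξ'‖ ^ 2 + lam) := by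
  set M := ∑ i, ∑ j, |A i j| with hM
  have hM0 : 0 ≤ M := Finset.sum_nonneg fun _ _ => Finset.sum_nonneg fun _ _ => abs_nonneg _
  set x := ‖ξ'‖ with hx
  have hx0 : 0 ≤ x := norm_nonneg _
  have ha : |aCoef A| ≤ M := abs_aCoef_le A
  have hb : |bCoef A ξ'| ≤ M * x := abs_bCoef_le A ξ'
  have hc : |cCoef A ξ'| ≤ M * x ^ 2 := abs_cCoef_le A ξ'
  have h1 : ‖Delta A Sig lam ξ'‖ ≤ |bCoef A ξ'| ^ 2 + |aCoef A| * |cCoef A ξ'|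
      + |aCoef A| * (lam * Sig) := by
    have e : Delta A Sig lam ξ' = -(bCoef A ξ' : ℂ) ^ 2 + (aCoef A : ℂ) * (cCoef A ξ' : ℂ)
        + (aCoef A : ℂ) * (Complex.I * lam * Sig) := by unfold Delta; ring
    rw [e]
    refine le_trans (norm_add_le _ _) ?_
    refine add_le_add (le_trans (norm_add_le _ _) ?_) ?_
    · apply add_le_add
      · rw [norm_neg, norm_pow, Complex.norm_real, Real.norm_eq_abs]
      · rw [norm_mul, Complex.norm_real, Complex.norm_real, Real.norm_eq_abs,
          Real.norm_eq_abs]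
    · rw [norm_mul, Complex.norm_real, Real.norm_eq_abs]
      refine mul_le_mul_of_nonneg_left ?_ (abs_nonneg _)
      rw [norm_mul, norm_mul, Complex.norm_I, one_mul, Complex.norm_real,
        Complex.norm_real, Real.norm_eq_abs, Real.norm_eq_abs,
        abs_of_nonneg (by linarith : (0:ℝ) ≤ lam), abs_of_nonneg hS.le]
  have hb2 : |bCoef A ξ'| ^ 2 ≤ (M * x) ^ 2 := by
    exact pow_le_pow_left₀ (abs_nonneg _) hb 2
  have hac : |aCoef A| * |cCoef A ξ'| ≤ M * (M * x ^ 2) :=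
    mul_le_mul ha hc (abs_nonneg _) hM0
  have haS : |aCoef A| * (lam * Sig) ≤ M * (lam * Sig) :=
    mul_le_mul_of_nonneg_right ha (by positivity)
  nlinarith [sq_nonneg x, sq_nonneg M, mul_nonneg hM0 hS.le, sq_nonneg (M*x)]

set_option maxHeartbeats 2000000 in
/-- symbol estimates: under the two non-degeneracy conditions,
`|Δ₂ − Δ₁|² ≥ C⁻¹(|ξ'|⁴ + λ²)`, `|Δ_j| ≤ C (|ξ'|² + λ)` and consequently
`|√Δ₂| ≤ C' |√Δ₂ − √Δ₁|` (square roots with positive real part). -/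
theorem stmt14 {d : ℕ} (hd : 1 ≤ d)
    (A₁ A₂ : Matrix (Fin (d + 1)) (Fin (d + 1)) ℝ)
    (hA₁s : A₁.IsSymm) (hA₂s : A₂.IsSymm)
    (hA₁p : ∀ x : EuclideanSpace ℝ (Fin (d + 1)), x ≠ 0 → 0 < qf A₁ x x)
    (hA₂p : ∀ x : EuclideanSpace ℝ (Fin (d + 1)), x ≠ 0 → 0 < qf A₂ x x)
    (Sig₁ Sig₂ : ℝ) (hS₁ : 0 < Sig₁) (hS₂ : 0 < Sig₂)
    -- non-degeneracy (i): the Gram determinants differ for all nonzero tangential ξ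
    (hcond1 : ∀ ξ : EuclideanSpace ℝ (Fin (d + 1)), ξ (Fin.last d) = 0 → ξ ≠ 0 →
      qf A₂ (EuclideanSpace.single (Fin.last d) 1) (EuclideanSpace.single (Fin.last d) 1) *
          qf A₂ ξ ξ -
        (qf A₂ (EuclideanSpace.single (Fin.last d) 1) ξ) ^ 2 ≠
      qf A₁ (EuclideanSpace.single (Fin.last d) 1) (EuclideanSpace.single (Fin.last d) 1) *
          qf A₁ ξ ξ -
        (qf A₁ (EuclideanSpace.single (Fin.last d) 1) ξ) ^ 2)
    -- non-degeneracy (ii): `⟨A₁ e_d, e_d⟩ Σ₁ ≠ ⟨A₂ e_d, e_d⟩ Σ₂`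
    (hcond2 : aCoef A₁ * Sig₁ ≠ aCoef A₂ * Sig₂) :
    ∃ C > 0,
      (∀ (ξ' : EuclideanSpace ℝ (Fin d)) (lam : ℝ), 1 ≤ lam →
        C⁻¹ * (‖ξ'‖ ^ 4 + lam ^ 2) ≤ ‖Delta A₂ Sig₂ lam ξ' - Delta A₁ Sig₁ lam ξ'‖ ^ 2 ∧
        ‖Delta A₁ Sig₁ lam ξ'‖ ≤ C * (‖ξ'‖ ^ 2 + lam) ∧
        ‖Delta A₂ Sig₂ lam ξ'‖ ≤ C * (‖ξ'‖ ^ 2 + lam)) ∧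
      ∃ C' > 0, ∀ (ξ' : EuclideanSpace ℝ (Fin d)) (lam : ℝ), 1 ≤ lam →
        ∀ s₁ s₂ : ℂ, s₁ ^ 2 = Delta A₁ Sig₁ lam ξ' → s₂ ^ 2 = Delta A₂ Sig₂ lam ξ' →
          0 < s₁.re → 0 < s₂.re → ‖s₂‖ ≤ C' * ‖s₂ - s₁‖ := by
  classical
  set g : EuclideanSpace ℝ (Fin d) → ℝ := fun ξ' =>
    (aCoef A₂ * cCoef A₂ ξ' - (bCoef A₂ ξ') ^ 2) -
    (aCoef A₁ * cCoef A₁ ξ' - (bCoef A₁ ξ') ^ 2) with hgdef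
  have hgcont : Continuous g :=
    ((continuous_const.mul (cCoef_cont A₂)).sub ((bCoef_cont A₂).pow 2)).sub
      ((continuous_const.mul (cCoef_cont A₁)).sub ((bCoef_cont A₁).pow 2))
  have hg0 : ∀ ξ' : EuclideanSpace ℝ (Fin d), ξ' ≠ 0 → g ξ' ≠ 0 := by
    intro ξ' hne
    have h := hcond1 (ext ξ') (ext_last ξ') (ext_ne_zero ξ' hne)
    rw [qf_ee, qf_ee, qf_ext_ext, qf_ext_ext, qf_e_ext A₁ hA₁s, qf_e_ext A₂ hA₂s] at h
    exact sub_ne_zero_of_ne h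
  have hgs : ∀ (t : ℝ) (ξ' : EuclideanSpace ℝ (Fin d)), g (t • ξ') = t ^ 2 * g ξ' := by
    intro t ξ'
    simp only [hgdef, bCoef_smul, cCoef_smul]
    ring
  -- minimum on the sphere
  have hcpt : IsCompact (Metric.sphere (0 : EuclideanSpace ℝ (Fin d)) 1) :=
    isCompact_sphere 0 1
  have hsne : (Metric.sphere (0 : EuclideanSpace ℝ (Fin d)) 1).Nonempty := by
    refine ⟨EuclideanSpace.single ⟨0, hd⟩ 1, ?_⟩
    rw [mem_sphere_zero_iff_norm, EuclideanSpace.norm_single]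
    norm_num
  obtain ⟨u₀, hu₀mem, hu₀min⟩ := hcpt.exists_isMinOn hsne
    ((continuous_abs.comp hgcont).continuousOn)
  have hu₀ : ‖u₀‖ = 1 := mem_sphere_zero_iff_norm.mp hu₀mem
  set m := |g u₀| with hmdef
  have hm : 0 < m := by
    refine abs_pos.mpr (hg0 u₀ ?_)
    intro h
    rw [h, norm_zero] at hu₀
    norm_num at hu₀
  have hlow : ∀ ξ' : EuclideanSpace ℝ (Fin d), m * ‖ξ'‖ ^ 2 ≤ |g ξ'| := by
    intro ξ'
    rcases eq_or_ne ξ' 0 with rfl | hne'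
    · have h0 : g 0 = 0 := by
        have := hgs 0 0
        simpa using this
      simp [h0]
    · have hn : (0:ℝ) < ‖ξ'‖ := norm_pos_iff.mpr hne'
      set u := (‖ξ'‖⁻¹ : ℝ) • ξ' with hu_def
      have hu1 : ‖u‖ = 1 := by
        rw [hu_def, norm_smul, norm_inv, norm_norm, inv_mul_cancel₀ hn.ne']
      have hgu : g ξ' = ‖ξ'‖ ^ 2 * g u := by
        have h1 : (‖ξ'‖ : ℝ) • u = ξ' := by
          rw [hu_def, smul_smul, mul_inv_cancel₀ hn.ne', one_smul]
        calc g ξ' = g ((‖ξ'‖ : ℝ) • u) := by rw [h1]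
          _ = ‖ξ'‖ ^ 2 * g u := hgs _ _
      have h3 : m ≤ |g u| := isMinOn_iff.mp hu₀min u (mem_sphere_zero_iff_norm.mpr hu1)
      calc m * ‖ξ'‖ ^ 2 ≤ |g u| * ‖ξ'‖ ^ 2 :=
            mul_le_mul_of_nonneg_right h3 (sq_nonneg _)
        _ = |g ξ'| := by rw [hgu, abs_mul, abs_of_nonneg (sq_nonneg ‖ξ'‖)]; ring
  -- imaginary-part gap
  set κ := aCoef A₂ * Sig₂ - aCoef A₁ * Sig₁ with hκdef
  have hκ : κ ≠ 0 := sub_ne_zero_of_ne (Ne.symm hcond2)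
  have hκ2 : 0 < κ ^ 2 := by rw [← sq_abs]; exact pow_pos (abs_pos.mpr hκ) 2
  have hm2 : 0 < m ^ 2 := pow_pos hm 2
  -- the constant
  set M₁ := ∑ i, ∑ j, |A₁ i j| with hM₁
  set M₂ := ∑ i, ∑ j, |A₂ i j| with hM₂
  set K₁ := 2 * M₁ ^ 2 + M₁ * Sig₁ + 1 with hK₁
  set K₂ := 2 * M₂ ^ 2 + M₂ * Sig₂ + 1 with hK₂
  have hM₁0 : 0 ≤ M₁ := Finset.sum_nonneg fun _ _ => Finset.sum_nonneg fun _ _ => abs_nonneg _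
  have hM₂0 : 0 ≤ M₂ := Finset.sum_nonneg fun _ _ => Finset.sum_nonneg fun _ _ => abs_nonneg _
  have hK₁0 : 0 < K₁ := by
    have := mul_nonneg hM₁0 hS₁.le
    have := sq_nonneg M₁
    rw [hK₁]; linarith
  have hK₂0 : 0 < K₂ := by
    have := mul_nonneg hM₂0 hS₂.le
    have := sq_nonneg M₂
    rw [hK₂]; linarith
  set C := K₁ + K₂ + (m ^ 2)⁻¹ + (κ ^ 2)⁻¹ with hCdef
  have hm2i : 0 < (m ^ 2)⁻¹ := inv_pos.mpr hm2
  have hκ2i : 0 < (κ ^ 2)⁻¹ := inv_pos.mpr hκ2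
  have hC : 0 < C := by rw [hCdef]; linarith
  have hCm : C⁻¹ ≤ m ^ 2 := by
    rw [← inv_inv (m ^ 2)]
    apply inv_anti₀ hm2i
    rw [hCdef]; linarith
  have hCκ : C⁻¹ ≤ κ ^ 2 := by
    rw [← inv_inv (κ ^ 2)]
    apply inv_anti₀ hκ2i
    rw [hCdef]; linarith
  have hCK₁ : K₁ ≤ C := by rw [hCdef]; linarith
  have hCK₂ : K₂ ≤ C := by rw [hCdef]; linarith
  -- the three estimates
  have main : ∀ (ξ' : EuclideanSpace ℝ (Fin d)) (lam : ℝ), 1 ≤ lam →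
      C⁻¹ * (‖ξ'‖ ^ 4 + lam ^ 2) ≤ ‖Delta A₂ Sig₂ lam ξ' - Delta A₁ Sig₁ lam ξ'‖ ^ 2 ∧
      ‖Delta A₁ Sig₁ lam ξ'‖ ≤ C * (‖ξ'‖ ^ 2 + lam) ∧
      ‖Delta A₂ Sig₂ lam ξ'‖ ≤ C * (‖ξ'‖ ^ 2 + lam) := by
    intro ξ' lam hlam
    have hT0 : (0:ℝ) < ‖ξ'‖ ^ 2 + lam := by
      have := sq_nonneg ‖ξ'‖
      linarith
    refine ⟨?_, ?_, ?_⟩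
    · -- lower bound
      have hre : (Delta A₂ Sig₂ lam ξ' - Delta A₁ Sig₁ lam ξ').re = g ξ' := by
        rw [Complex.sub_re, Delta_re, Delta_re, hgdef]
      have him : (Delta A₂ Sig₂ lam ξ' - Delta A₁ Sig₁ lam ξ').im = κ * lam := by
        rw [Complex.sub_im, Delta_im, Delta_im, hκdef]; ring
      have hnorm : ‖Delta A₂ Sig₂ lam ξ' - Delta A₁ Sig₁ lam ξ'‖ ^ 2
          = (g ξ') ^ 2 + (κ * lam) ^ 2 := by
        rw [Complex.sq_norm, Complex.normSq_apply, hre, him]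
        ring
      rw [hnorm]
      have h1 : (m * ‖ξ'‖ ^ 2) ^ 2 ≤ (g ξ') ^ 2 := by
        rw [← sq_abs (g ξ')]
        exact pow_le_pow_left₀ (mul_nonneg hm.le (sq_nonneg _)) (hlow ξ') 2
      have hA : C⁻¹ * ‖ξ'‖ ^ 4 ≤ (g ξ') ^ 2 := by
        calc C⁻¹ * ‖ξ'‖ ^ 4 ≤ m ^ 2 * ‖ξ'‖ ^ 4 :=
              mul_le_mul_of_nonneg_right hCm (by positivity)
          _ = (m * ‖ξ'‖ ^ 2) ^ 2 := by ring
          _ ≤ (g ξ') ^ 2 := h1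
      have hB : C⁻¹ * lam ^ 2 ≤ (κ * lam) ^ 2 := by
        calc C⁻¹ * lam ^ 2 ≤ κ ^ 2 * lam ^ 2 :=
              mul_le_mul_of_nonneg_right hCκ (sq_nonneg lam)
          _ = (κ * lam) ^ 2 := by ring
      rw [mul_add]
      exact add_le_add hA hB
    · calc ‖Delta A₁ Sig₁ lam ξ'‖ ≤ K₁ * (‖ξ'‖ ^ 2 + lam) := Delta_norm_le A₁ Sig₁ lam hS₁ ξ' hlam
        _ ≤ C * (‖ξ'‖ ^ 2 + lam) := mul_le_mul_of_nonneg_right hCK₁ hT0.le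
    · calc ‖Delta A₂ Sig₂ lam ξ'‖ ≤ K₂ * (‖ξ'‖ ^ 2 + lam) := Delta_norm_le A₂ Sig₂ lam hS₂ ξ' hlam
        _ ≤ C * (‖ξ'‖ ^ 2 + lam) := mul_le_mul_of_nonneg_right hCK₂ hT0.le
  have h8C3 : (0:ℝ) < 8 * C ^ 3 := by
    have := pow_pos hC 3
    linarith
  refine ⟨C, hC, main, Real.sqrt (8 * C ^ 3), Real.sqrt_pos.mpr h8C3, ?_⟩
  intro ξ' lam hlam s₁ s₂ hs₁ hs₂ _ _
  obtain ⟨hlo, hup₁, hup₂⟩ := main ξ' lam hlam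
  set x := ‖ξ'‖ with hxdef
  set T := x ^ 2 + lam with hTdef
  have hT0 : (0:ℝ) < T := by have : (0:ℝ) ≤ x ^ 2 := sq_nonneg x; rw [hTdef]; linarith
  set N := ‖s₂ - s₁‖ with hNdef
  set D := ‖Delta A₂ Sig₂ lam ξ' - Delta A₁ Sig₁ lam ξ'‖ with hDdef
  have hN0 : 0 ≤ N := norm_nonneg _
  have hD0 : 0 ≤ D := norm_nonneg _
  have h1 : ‖s₁‖ ^ 2 ≤ C * T := by
    rw [← norm_pow, hs₁]; exact hup₁
  have h2 : ‖s₂‖ ^ 2 ≤ C * T := by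
    rw [← norm_pow, hs₂]; exact hup₂
  have h3 : x ^ 4 + lam ^ 2 ≤ C * D ^ 2 := by
    have := mul_le_mul_of_nonneg_left hlo hC.le
    calc x ^ 4 + lam ^ 2 = C * (C⁻¹ * (x ^ 4 + lam ^ 2)) := by
          rw [← mul_assoc, mul_inv_cancel₀ hC.ne', one_mul]
      _ ≤ C * D ^ 2 := this
  have h4 : D ≤ N * (‖s₂‖ + ‖s₁‖) := by
    have e : Delta A₂ Sig₂ lam ξ' - Delta A₁ Sig₁ lam ξ' = (s₂ - s₁) * (s₂ + s₁) := by
      rw [← hs₁, ← hs₂]; ring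
    rw [hDdef, e, norm_mul]
    exact mul_le_mul_of_nonneg_left (norm_add_le _ _) hN0
  have hT2 : T ^ 2 ≤ 2 * (x ^ 4 + lam ^ 2) := by
    rw [hTdef]
    have hid : 2 * (x ^ 4 + lam ^ 2) - (x ^ 2 + lam) ^ 2 = (x ^ 2 - lam) ^ 2 := by ring
    linarith only [hid, sq_nonneg (x ^ 2 - lam)]
  have e1 : D ^ 2 ≤ N ^ 2 * (‖s₂‖ + ‖s₁‖) ^ 2 := by
    have := pow_le_pow_left₀ hD0 h4 2
    calc D ^ 2 ≤ (N * (‖s₂‖ + ‖s₁‖)) ^ 2 := this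
      _ = N ^ 2 * (‖s₂‖ + ‖s₁‖) ^ 2 := by ring
  have e2 : (‖s₂‖ + ‖s₁‖) ^ 2 ≤ 4 * (C * T) := by
    have hid : (‖s₂‖ + ‖s₁‖) ^ 2 = 2 * (‖s₂‖ ^ 2 + ‖s₁‖ ^ 2) - (‖s₂‖ - ‖s₁‖) ^ 2 := by ring
    linarith only [hid, sq_nonneg (‖s₂‖ - ‖s₁‖), h1, h2]
  have e3 : T ^ 2 ≤ (8 * C ^ 2 * N ^ 2) * T := by
    calc T ^ 2 ≤ 2 * (x ^ 4 + lam ^ 2) := hT2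
      _ ≤ 2 * (C * D ^ 2) := by linarith
      _ ≤ 2 * (C * (N ^ 2 * (‖s₂‖ + ‖s₁‖) ^ 2)) := by
          have := mul_le_mul_of_nonneg_left e1 hC.le
          linarith
      _ ≤ 2 * (C * (N ^ 2 * (4 * (C * T)))) := by
          have h := mul_le_mul_of_nonneg_left e2 (sq_nonneg N)
          have := mul_le_mul_of_nonneg_left h hC.le
          linarith
      _ = (8 * C ^ 2 * N ^ 2) * T := by ring
  have e4 : T ≤ 8 * C ^ 2 * N ^ 2 := by
    have h' : T * T ≤ (8 * C ^ 2 * N ^ 2) * T := by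
      calc T * T = T ^ 2 := by ring
        _ ≤ (8 * C ^ 2 * N ^ 2) * T := e3
    exact le_of_mul_le_mul_right h' hT0
  have e5 : ‖s₂‖ ^ 2 ≤ 8 * C ^ 3 * N ^ 2 := by
    have := mul_le_mul_of_nonneg_left e4 hC.le
    calc ‖s₂‖ ^ 2 ≤ C * T := h2
      _ ≤ C * (8 * C ^ 2 * N ^ 2) := this
      _ = 8 * C ^ 3 * N ^ 2 := by ring
  calc ‖s₂‖ = Real.sqrt (‖s₂‖ ^ 2) := (Real.sqrt_sq (norm_nonneg _)).symm
    _ ≤ Real.sqrt (8 * C ^ 3 * N ^ 2) := Real.sqrt_le_sqrt e5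
    _ = Real.sqrt (8 * C ^ 3) * N := by
        rw [Real.sqrt_mul h8C3.le, Real.sqrt_sq hN0]
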